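/- Left extension of the earlier copy of the longest repeating suffix is unique: let W = W[1..n], let L be the longest repeating suffix of W, and assume L is nonempty, #occ_W(L) = 2, and the non-suffix occurrence of L is W[ℓ..q] = L with q ≤ n − 1 and ℓ ≥ 2. Then the string W[ℓ−1..q] is unique in W, i.e., #occ_W(W[ℓ−1..q]) = 1. -/

import Mathlib

variable {α : Type*}

/-- `occursAt T S p`: the string `S` occurs at the 1-based position `p` in `T`,
i.e. `1 ≤ p ≤ |T| − |S| + 1` and `T[p..p+|S|−1] = S`. -/
def occursAt (T S : List α) (p : ℕ) : Prop :=
  1 ≤ p ∧ p + S.length ≤ T.length + 1 ∧ (T.drop (p - 1)).take S.length = S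

/-- `#occ_T(S)`: the number of positions at which `S` occurs in `T`. -/
noncomputable def occCount (T S : List α) : ℕ :=
  {p : ℕ | occursAt T S p}.ncard

/-- `sub T i ℓ = T[i..i+ℓ−1]` (1-based substring of length `ℓ` starting at `i`). -/
def sub (T : List α) (i ℓ : ℕ) : List α := (T.drop (i - 1)).take ℓ

/-- Longest previous factor array (1-based): `LPF T i` is the largest `ℓ ≥ 0` such that
the prefix `T[i..i+ℓ−1]` of `T[i..n]` also occurs at some position `j < i` in `T`. -/
noncomputable def LPF (T : List α) (i : ℕ) : ℕ :=
  @Nat.findGreatest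
    (fun ℓ => (i - 1) + ℓ ≤ T.length ∧ ∃ j, 1 ≤ j ∧ j < i ∧ occursAt T (sub T i ℓ) j)
    (Classical.decPred _) T.length

/-- Longest repeating suffix array (1-based): `LRS T i` is the length of the longest
suffix of `T[1..i]` occurring at least twice in `T[1..i]`. -/
noncomputable def LRS (T : List α) (i : ℕ) : ℕ :=
  @Nat.findGreatest
    (fun ℓ => 2 ≤ occCount (T.take i) ((T.take i).drop (i - ℓ)))
    (Classical.decPred _) i

/-!
An occurrence of `c L` (with `c = W[ℓ−1]`) at `p` yields an occurrence of `L` at `p + 1`, so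
`p + 1` is one of the two occurrences of `L`. If it were the suffix one, `c L` would be a suffix
of `W` occurring both at `p` and at `ℓ − 1 < p`, i.e. a longer repeating suffix than `L`.
-/

lemma occSet_finite (T S : List α) : {p : ℕ | occursAt T S p}.Finite :=
  (Set.finite_Iic (T.length + 1)).subset fun _ ⟨_, h, _⟩ => by simp only [Set.mem_Iic]; omega

lemma two_le_occCount {T S : List α} {a b : ℕ} (ha : occursAt T S a) (hb : occursAt T S b)
    (hab : a ≠ b) : 2 ≤ occCount T S :=
  (Set.one_lt_ncard_iff (occSet_finite T S)).mpr ⟨a, b, ha, hb, hab⟩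

lemma occCount_eq_one {T S : List α} {p : ℕ} (hp : occursAt T S p)
    (huniq : ∀ q, occursAt T S q → q = p) : occCount T S = 1 :=
  Set.ncard_eq_one.mpr ⟨p, Set.eq_singleton_iff_unique_mem.mpr ⟨hp, huniq⟩⟩

lemma eq_or_eq_of_occCount_eq_two {T S : List α} {a b p : ℕ} (h : occCount T S = 2)
    (ha : occursAt T S a) (hb : occursAt T S b) (hab : a ≠ b) (hp : occursAt T S p) :
    p = a ∨ p = b := by
  obtain ⟨x, y, -, hxy⟩ := Set.ncard_eq_two.mp h
  have ha' : a ∈ ({x, y} : Set ℕ) := hxy ▸ ha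
  have hb' : b ∈ ({x, y} : Set ℕ) := hxy ▸ hb
  have hp' : p ∈ ({x, y} : Set ℕ) := hxy ▸ hp
  simp only [Set.mem_insert_iff, Set.mem_singleton_iff] at ha' hb' hp'
  omega

lemma occursAt_suffix (T : List α) (k : ℕ) :
    occursAt T (T.drop (T.length - k)) (T.length - k + 1) := by
  refine ⟨by omega, by simp only [List.length_drop]; omega, ?_⟩
  simp

lemma occursAt_sub {T : List α} {i k : ℕ} (hi : 1 ≤ i) (hik : i + k ≤ T.length + 1) :
    occursAt T (sub T i k) i := by
  refine ⟨hi, ?_, ?_⟩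
  · simp only [sub, List.length_take, List.length_drop]; omega
  · simp only [sub, List.length_take, List.length_drop]
    congr 1
    omega

lemma sub_tail (T : List α) {i : ℕ} (hi : 1 ≤ i) (k : ℕ) :
    (sub T i (k + 1)).tail = sub T (i + 1) k := by
  rw [sub, sub, ← List.drop_one, List.drop_take, List.drop_drop]
  congr 2
  omega

lemma occursAt.tail {T S : List α} {p : ℕ} (h : occursAt T S p) (hS : S ≠ []) :
    occursAt T S.tail (p + 1) := by
  obtain ⟨hp, hlen, heq⟩ := h
  have hSlen : 0 < S.length := List.length_pos_iff.mpr hS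
  refine ⟨by omega, by simp only [List.length_tail]; omega, ?_⟩
  have := congrArg List.tail heq
  rw [← List.drop_one, List.drop_take, List.drop_drop, Nat.sub_add_cancel hp] at this
  rwa [List.length_tail, Nat.add_sub_cancel]

lemma occursAt.drop_eq {T S : List α} {p : ℕ} (h : occursAt T S p)
    (hp : p + S.length = T.length + 1) : T.drop (p - 1) = S := by
  rw [← h.2.2, List.take_of_length_le (by simp only [List.length_drop]; omega)]

lemma LRS_le (T : List α) (i : ℕ) : LRS T i ≤ i :=
  @Nat.findGreatest_le _ (Classical.decPred _) i

lemma le_LRS_length {T : List α} {k : ℕ} (hk : k ≤ T.length)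
    (h : 2 ≤ occCount T (T.drop (T.length - k))) : k ≤ LRS T T.length :=
  @Nat.le_findGreatest _ _ (Classical.decPred _) _ hk (by simpa only [List.take_length] using h)

theorem left_extension_unique_general (W : List α) (ℓ : ℕ)
    (h2 : occCount W (W.drop (W.length - LRS W W.length)) = 2)
    (hocc : occursAt W (W.drop (W.length - LRS W W.length)) ℓ)
    (hq : ℓ + LRS W W.length ≤ W.length) (hℓ : 2 ≤ ℓ) :
    occCount W (sub W (ℓ - 1) (LRS W W.length + 1)) = 1 := by
  set n := W.length
  set m := LRS W n
  set L := W.drop (n - m)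
  set S := sub W (ℓ - 1) (m + 1)
  have hmn : m ≤ n := LRS_le W n
  have hLlen : L.length = m := by simp only [L, List.length_drop]; omega
  have hSocc : occursAt W S (ℓ - 1) := occursAt_sub (by omega) (by omega)
  have hSlen : S.length = m + 1 := by simp only [S, sub, List.length_take, List.length_drop]; omega
  have hStail : S.tail = L := by
    rw [sub_tail W (by omega), Nat.sub_add_cancel (by omega), ← hLlen]
    exact hocc.2.2
  refine occCount_eq_one hSocc fun p hp => ?_
  have hLp : occursAt W L (p + 1) := hStail ▸ hp.tail (List.ne_nil_of_length_pos (by omega))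
  rcases eq_or_eq_of_occCount_eq_two h2 hocc (occursAt_suffix W m) (by omega) hLp with hprev | hsuffix
  · omega
  · have hSsuffix : W.drop (n - (m + 1)) = S := by
      rw [← hp.drop_eq (by omega)]
      congr 1
      omega
    have hlonger : m + 1 ≤ m := le_LRS_length (by omega) (hSsuffix ▸ two_le_occCount hSocc hp (by omega))
    omega

/-- left extension of the earlier copy of the longest repeating suffix is
unique: if the longest repeating suffix `L` of `W` (of length `LRS[n]`) is nonempty,
`#occ_W(L) = 2`, and its non-suffix occurrence is `W[ℓ..q] = L` with
`q = ℓ + |L| − 1 ≤ n − 1` and `ℓ ≥ 2`, then `W[ℓ−1..q]` is unique in `W`. -/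
theorem left_extension_unique (W : List α) (ℓ : ℕ)
    (hL : 1 ≤ LRS W W.length)
    (h2 : occCount W (W.drop (W.length - LRS W W.length)) = 2)
    (hocc : occursAt W (W.drop (W.length - LRS W W.length)) ℓ)
    (hq : ℓ + LRS W W.length ≤ W.length) (hℓ : 2 ≤ ℓ) :
    occCount W (sub W (ℓ - 1) (LRS W W.length + 1)) = 1 :=
  left_extension_unique_general W ℓ h2 hocc hq hℓ
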